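/- arXiv:1202.5286 — 8 statements merged into one kernel-verified Lean document; each statement's English description precedes it below -/
import Mathlib

section
/- For every topological space B, the topological complexity TC(B) equals cat*_B(d(B)) + 1, as an equality in ℕ∞ (with the convention ∞ + 1 = ∞). In particular, for every m ≥ 0, B × B can be covered by m + 1 open sets each admitting a continuous section of π if and only if B × B can be covered by m + 1 open sets each fibrewise compressible into the diagonal. -/
open unitInterval

/-- An open (or arbitrary) subset `U ⊆ B × B` admits a continuous section of the
path fibration `π : P(B) → B × B`, `π(ℓ) = (ℓ(0), ℓ(1))`. -/
def HasPathSection (B : Type) [TopologicalSpace B] (U : Set (B × B)) : Prop :=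
  ∃ s : C(↥U, C(I, B)), ∀ x : ↥U, s x 0 = (x : B × B).1 ∧ s x 1 = (x : B × B).2

/-- `B × B` is covered by `n` open subsets, each admitting a continuous section of `π`. -/
def SecCover (B : Type) [TopologicalSpace B] (n : ℕ) : Prop :=
  ∃ U : Fin n → Set (B × B), (∀ i, IsOpen (U i)) ∧ (⋃ i, U i) = Set.univ ∧
    ∀ i, HasPathSection B (U i)

/-- The topological complexity of `B`, as an element of `ℕ∞`. -/
noncomputable def topComplexity (B : Type) [TopologicalSpace B] : ℕ∞ :=
  sInf {n : ℕ∞ | ∃ m : ℕ, n = m ∧ 1 ≤ m ∧ SecCover B m}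

/-- `U ⊆ B × B` is fibrewise compressible into the diagonal: there is a homotopy
`H` from the inclusion ending in the diagonal, whose second coordinate is constant. -/
def FibDiagCompressible (B : Type) [TopologicalSpace B] (U : Set (B × B)) : Prop :=
  ∃ H : C(↥U × I, B × B),
    (∀ x : ↥U, H (x, 0) = (x : B × B)) ∧
    (∀ x : ↥U, (H (x, 1)).1 = (H (x, 1)).2) ∧
    (∀ (x : ↥U) (t : I), (H (x, t)).2 = (x : B × B).2)

/-- `B × B` is covered by `n` open subsets, each fibrewise compressible into the diagonal. -/
def CompCover (B : Type) [TopologicalSpace B] (n : ℕ) : Prop :=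
  ∃ U : Fin n → Set (B × B), (∀ i, IsOpen (U i)) ∧ (⋃ i, U i) = Set.univ ∧
    ∀ i, FibDiagCompressible B (U i)

/-- The fibrewise unpointed L-S category of the fibrewise pointed space
`d(B) = (B × B, pr₂, Δ)`, as an element of `ℕ∞`. -/
noncomputable def catStarDiag (B : Type) [TopologicalSpace B] : ℕ∞ :=
  sInf {n : ℕ∞ | ∃ m : ℕ, n = m ∧ CompCover B (m + 1)}

/-!
A section `s` of `π` over `U` and a fibrewise compression of `U` into the diagonal are the same
data: `s` gives the homotopy `((a, b), t) ↦ (s (a, b) t, b)`, and conversely the first coordinate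
of a compression `H` is a path from `a` to the first coordinate of `H ((a, b), 1)`, which lies on
the diagonal over `b`, i.e. equals `b`. Hence the two kinds of covers coincide, and
`TC(B) = cat*_B(d(B)) + 1` is only the shift between the normalisations of `TC` and `cat*`.
-/

theorem ENat.sInf_setOf_natCast_pos (P : ℕ → Prop) :
    sInf {n : ℕ∞ | ∃ m : ℕ, n = m ∧ 1 ≤ m ∧ P m} =
      sInf {n : ℕ∞ | ∃ m : ℕ, n = m ∧ P (m + 1)} + 1 := by
  have hshift : {n : ℕ∞ | ∃ m : ℕ, n = m ∧ 1 ≤ m ∧ P m} =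
      (· + 1) '' {n : ℕ∞ | ∃ m : ℕ, n = m ∧ P (m + 1)} := by
    ext n
    constructor
    · rintro ⟨m, rfl, hm, hP⟩
      obtain ⟨k, rfl⟩ := Nat.exists_eq_add_of_le' hm
      exact ⟨k, ⟨k, rfl, hP⟩, by push_cast; rfl⟩
    · rintro ⟨_, ⟨k, rfl, hP⟩, rfl⟩
      exact ⟨k + 1, by push_cast; rfl, Nat.le_add_left 1 k, hP⟩
  rw [hshift, sInf_image, ENat.sInf_add]

theorem hasPathSection_iff_fibDiagCompressible_s0 (B : Type) [TopologicalSpace B]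
    (U : Set (B × B)) : HasPathSection B U ↔ FibDiagCompressible B U := by
  constructor
  · rintro ⟨s, hs⟩
    exact ⟨⟨fun p => (s p.1 p.2, (p.1 : B × B).2), by fun_prop⟩,
      fun x => by simp [(hs x).1], fun x => by simp [(hs x).2], fun _ _ => rfl⟩
  · rintro ⟨H, h_start, h_diag, h_fibre⟩
    refine ⟨(ContinuousMap.fst.comp H).curry, fun x => ⟨?_, ?_⟩⟩
    · simpa using congrArg Prod.fst (h_start x)
    · simpa using (h_diag x).trans (h_fibre x 1)

theorem secCover_iff_compCover (B : Type) [TopologicalSpace B] (n : ℕ) :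
    SecCover B n ↔ CompCover B n := by
  simp only [SecCover, CompCover, hasPathSection_iff_fibDiagCompressible_s0]

/-- `TC(B) = cat*_B(d(B)) + 1`, and for every `m ≥ 0`, `B × B` is covered by `m + 1`
open sets admitting sections of `π` iff it is covered by `m + 1` open sets fibrewise
compressible into the diagonal. -/
theorem TC_eq_catStarDiag_add_one (B : Type) [TopologicalSpace B] :
    topComplexity B = catStarDiag B + 1 ∧
    ∀ m : ℕ, SecCover B (m + 1) ↔ CompCover B (m + 1) := by
  refine ⟨?_, fun m => secCover_iff_compCover B (m + 1)⟩
  simp only [topComplexity, catStarDiag, secCover_iff_compCover]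
  exact ENat.sInf_setOf_natCast_pos (CompCover B)
end

section
/- Let B be a topological space and U ⊆ B × B an open set. Then U admits a continuous section s : U → P(B) of π (i.e. s(a,b)(0) = a and s(a,b)(1) = b for all (a,b) ∈ U) if and only if U is fibrewise compressible into the diagonal. -/
open unitInterval

/-- An open subset `U ⊆ B × B` admits a continuous section of the path fibration
`π : P(B) → B × B`, `π(ℓ) = (ℓ(0), ℓ(1))`, if and only if `U` is fibrewise
compressible into the diagonal. -/
theorem hasPathSection_iff_fibDiagCompressible (B : Type) [TopologicalSpace B]
    (U : Set (B × B)) (hU : IsOpen U) :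
    (∃ s : C(↥U, C(I, B)), ∀ x : ↥U, s x 0 = (x : B × B).1 ∧ s x 1 = (x : B × B).2) ↔
    (∃ H : C(↥U × I, B × B),
      (∀ x : ↥U, H (x, 0) = (x : B × B)) ∧
      (∀ x : ↥U, (H (x, 1)).1 = (H (x, 1)).2) ∧
      (∀ (x : ↥U) (t : I), (H (x, t)).2 = (x : B × B).2)) := by
  constructor
  · rintro ⟨s, hs⟩
    refine ⟨⟨fun p => (s p.1 p.2, ((p.1 : B × B)).2), ?_⟩, ?_, ?_, ?_⟩
    · exact (s.uncurry.continuous).prodMk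
        (continuous_snd.comp (continuous_subtype_val.comp continuous_fst))
    · intro x; exact Prod.ext (hs x).1 rfl
    · intro x; exact (hs x).2
    · intro x t; rfl
  · rintro ⟨H, h0, h1, h2⟩
    refine ⟨ContinuousMap.curry ⟨fun p => (H p).1, continuous_fst.comp H.continuous⟩,
      fun x => ⟨?_, ?_⟩⟩
    · show (H (x, 0)).1 = _
      rw [h0 x]
    · show (H (x, 1)).1 = _
      rw [h1 x, h2 x 1]
end

section
/- Let B be a topological space and U ⊆ B × B an open set with Δ(B) ⊆ U. Then U admits a continuous section s : U → P(B) of π satisfying s(b,b) = the constant path at b for every b ∈ B, if and only if U is fibrewise compressible rel the diagonal. -/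
open unitInterval

/-!
A section `s` and a compression `H` determine each other: `H (x, t) = (s x t, x.2)` drags
the first point of `x` along the path `s x` to the second one, and conversely the first
coordinate of `H`, read as a family of paths indexed by `x`, runs from `x.1` to `H (x, 1).1`,
which equals `H (x, 1).2 = x.2`.
-/

namespace PathFibration

variable {B : Type*} [TopologicalSpace B] {U : Set (B × B)}

def compressionOfSection (s : C(U, C(I, B))) : C(U × I, B × B) :=
  ⟨fun p => (s p.1 p.2, (p.1 : B × B).2), by fun_prop⟩

@[simp]
theorem compressionOfSection_apply (s : C(U, C(I, B))) (x : U) (t : I) :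
    compressionOfSection s (x, t) = (s x t, (x : B × B).2) :=
  rfl

def sectionOfCompression (H : C(U × I, B × B)) : C(U, C(I, B)) :=
  (ContinuousMap.fst.comp H).curry

@[simp]
theorem sectionOfCompression_apply (H : C(U × I, B × B)) (x : U) (t : I) :
    sectionOfCompression H x t = (H (x, t)).1 :=
  rfl

end PathFibration

open PathFibration in
theorem hasPointedPathSection_iff_fibDiagCompressibleRel_general (B : Type) [TopologicalSpace B]
    (U : Set (B × B)) :
    (∃ s : C(↥U, C(I, B)),
      (∀ x : ↥U, s x 0 = (x : B × B).1 ∧ s x 1 = (x : B × B).2) ∧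
      (∀ (b : B) (hb : (b, b) ∈ U) (t : I), s ⟨(b, b), hb⟩ t = b)) ↔
    (∃ H : C(↥U × I, B × B),
      (∀ x : ↥U, H (x, 0) = (x : B × B)) ∧
      (∀ x : ↥U, (H (x, 1)).1 = (H (x, 1)).2) ∧
      (∀ (x : ↥U) (t : I), (H (x, t)).2 = (x : B × B).2) ∧
      (∀ (b : B) (hb : (b, b) ∈ U) (t : I), H (⟨(b, b), hb⟩, t) = (b, b))) := by
  constructor
  · rintro ⟨s, hends, hconst⟩
    refine ⟨compressionOfSection s, fun x => ?_, fun x => ?_, fun x t => rfl, fun b hb t => ?_⟩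
    · simp [(hends x).1]
    · simp [(hends x).2]
    · simp [hconst b hb t]
  · rintro ⟨H, hstart, hend, hfibre, hconst⟩
    refine ⟨sectionOfCompression H, fun x => ⟨?_, ?_⟩, fun b hb t => ?_⟩
    · simp [hstart x]
    · simp [hend x, hfibre x 1]
    · simp [hconst b hb t]

/-- An open subset `U ⊆ B × B` containing the diagonal admits a continuous section of
the path fibration `π : P(B) → B × B` with `s(b,b)` the constant path at `b`, if and
only if `U` is fibrewise compressible rel the diagonal. -/
theorem hasPointedPathSection_iff_fibDiagCompressibleRel (B : Type) [TopologicalSpace B]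
    (U : Set (B × B)) (hU : IsOpen U) (hdiag : Set.diagonal B ⊆ U) :
    (∃ s : C(↥U, C(I, B)),
      (∀ x : ↥U, s x 0 = (x : B × B).1 ∧ s x 1 = (x : B × B).2) ∧
      (∀ (b : B) (hb : (b, b) ∈ U) (t : I), s ⟨(b, b), hb⟩ t = b)) ↔
    (∃ H : C(↥U × I, B × B),
      (∀ x : ↥U, H (x, 0) = (x : B × B)) ∧
      (∀ x : ↥U, (H (x, 1)).1 = (H (x, 1)).2) ∧
      (∀ (x : ↥U) (t : I), (H (x, t)).2 = (x : B × B).2) ∧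
      (∀ (b : B) (hb : (b, b) ∈ U) (t : I), H (⟨(b, b), hb⟩, t) = (b, b))) :=
  hasPointedPathSection_iff_fibDiagCompressibleRel_general B U
end

section
/- Let B and Y be topological spaces, f : Y → B × B a continuous map, and U ⊆ Y an open set admitting a continuous map σ : U → P(B) with (σ(y)(0), σ(y)(1)) = f(y) for all y ∈ U. Let Ŷ = Y ⊕ B be the topological sum, let f̂ : Ŷ → B × B be given by f̂ = f on Y and f̂(b) = (b,b) on B, and let Û = U ⊕ B, an open subset of Ŷ. Then there exists a continuous homotopy Φ : Û × [0,1] → B × B such that Φ(ŷ, 0) = f̂(ŷ), Φ(ŷ, 1) ∈ Δ(B), the second coordinate of Φ(ŷ, t) equals the second coordinate of f̂(ŷ) for all ŷ ∈ Û and t ∈ [0,1], and Φ(b, t) = (b,b) for every b ∈ B ⊆ Ŷ and t ∈ [0,1]. -/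
/-!
Over `U` the section itself is the compression: `t ↦ (sec y t, (f y).2)` runs from `f y` to the
diagonal point `((f y).2, (f y).2)` while keeping the second coordinate fixed. Over `B` the
constant homotopy at `(b, b)` does. Since `Û = U ⊕ B` carries the sum topology, the two glue to a
continuous homotopy.
-/

open unitInterval Topology Set

section SumTopology

variable {X Y Z W : Type*}

lemma Set.range_sumMap_subtypeVal_id (s : Set X) :
    range (Sum.map ((↑) : s → X) (id : Y → Y)) = Sum.inl '' s ∪ range Sum.inr := by
  ext (x | y) <;> simp

variable [TopologicalSpace X] [TopologicalSpace Y] [TopologicalSpace Z] [TopologicalSpace W]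

lemma Topology.IsEmbedding.sumMap {f : X → Z} {g : Y → W} (hf : IsEmbedding f)
    (hg : IsEmbedding g) : IsEmbedding (Sum.map f g) :=
  (IsEmbedding.inl.comp hf).sumElim_of_separatedNhds (IsEmbedding.inr.comp hg)
    ⟨range Sum.inl, range Sum.inr, isOpen_range_inl, isOpen_range_inr,
      range_comp_subset_range _ _, range_comp_subset_range _ _,
      Set.disjoint_left.2 fun _ ⟨_, ha⟩ ⟨_, hb⟩ => by simp [← ha] at hb⟩

noncomputable def Homeomorph.sumInlImageUnionRange (s : Set X) :
    s ⊕ Y ≃ₜ ↥(Sum.inl '' s ∪ range Sum.inr : Set (X ⊕ Y)) :=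
  (IsEmbedding.subtypeVal.sumMap IsEmbedding.id).toHomeomorph.trans
    (Homeomorph.setCongr (range_sumMap_subtypeVal_id s))

def ContinuousMap.sumProdElim (f : C(X × Z, W)) (g : C(Y × Z, W)) : C((X ⊕ Y) × Z, W) :=
  ⟨Sum.elim f g ∘ Homeomorph.sumProdDistrib,
    (f.continuous.sumElim g.continuous).comp Homeomorph.sumProdDistrib.continuous⟩

@[simp]
lemma ContinuousMap.sumProdElim_inl (f : C(X × Z, W)) (g : C(Y × Z, W)) (x : X) (z : Z) :
    sumProdElim f g (Sum.inl x, z) = f (x, z) :=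
  rfl

@[simp]
lemma ContinuousMap.sumProdElim_inr (f : C(X × Z, W)) (g : C(Y × Z, W)) (y : Y) (z : Z) :
    sumProdElim f g (Sum.inr y, z) = g (y, z) :=
  rfl

end SumTopology

section Compression

variable {X B : Type*} [TopologicalSpace X] [TopologicalSpace B]

def sectionCompression (g : C(X, B × B)) (s : C(X, C(I, B))) : C((X ⊕ B) × I, B × B) :=
  ContinuousMap.sumProdElim ⟨fun p => (s p.1 p.2, (g p.1).2), by fun_prop⟩
    ⟨fun p => (p.1, p.1), by fun_prop⟩

variable (g : C(X, B × B)) (s : C(X, C(I, B)))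

lemma sectionCompression_zero (hs : ∀ x, (s x 0, s x 1) = g x) (z : X ⊕ B) :
    sectionCompression g s (z, 0) = Sum.elim g (fun b => (b, b)) z := by
  rcases z with x | b
  · simp [sectionCompression, ← hs x]
  · simp [sectionCompression]

lemma sectionCompression_one_fst_eq_snd (hs : ∀ x, (s x 0, s x 1) = g x) (z : X ⊕ B) :
    (sectionCompression g s (z, 1)).1 = (sectionCompression g s (z, 1)).2 := by
  rcases z with x | b
  · simp [sectionCompression, ← hs x]
  · simp [sectionCompression]

lemma sectionCompression_snd (z : X ⊕ B) (t : I) :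
    (sectionCompression g s (z, t)).2 = (Sum.elim g (fun b => (b, b)) z).2 := by
  rcases z with x | b <;> simp [sectionCompression]

lemma sectionCompression_inr (b : B) (t : I) : sectionCompression g s (Sum.inr b, t) = (b, b) :=
  rfl

end Compression

theorem section_gives_pointed_compression_general (B Y : Type) [TopologicalSpace B]
    [TopologicalSpace Y] (f : C(Y, B × B)) (U : Set Y)
    (sec : C(↥U, C(I, B))) (hsec : ∀ y : ↥U, (sec y 0, sec y 1) = f (y : Y)) :
    ∃ Φ : C(↥(Sum.inl '' U ∪ Set.range Sum.inr : Set (Y ⊕ B)) × I, B × B),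
      (∀ x : ↥(Sum.inl '' U ∪ Set.range Sum.inr : Set (Y ⊕ B)),
        Φ (x, 0) = Sum.elim ⇑f (fun b => (b, b)) (x : Y ⊕ B)) ∧
      (∀ x : ↥(Sum.inl '' U ∪ Set.range Sum.inr : Set (Y ⊕ B)),
        (Φ (x, 1)).1 = (Φ (x, 1)).2) ∧
      (∀ (x : ↥(Sum.inl '' U ∪ Set.range Sum.inr : Set (Y ⊕ B))) (t : I),
        (Φ (x, t)).2 = (Sum.elim ⇑f (fun b => (b, b)) (x : Y ⊕ B)).2) ∧
      (∀ (b : B) (hb : (Sum.inr b : Y ⊕ B) ∈ (Sum.inl '' U ∪ Set.range Sum.inr : Set (Y ⊕ B)))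
        (t : I), Φ (⟨Sum.inr b, hb⟩, t) = (b, b)) := by
  let e := Homeomorph.sumInlImageUnionRange (Y := B) U
  let H := sectionCompression (f.restrict U) sec
  let Φ : C(_ × I, B × B) := ⟨fun p => H (e.symm p.1, p.2), by fun_prop⟩
  have hΦ : ∀ z t, Φ (e z, t) = H (z, t) := by
    simp [Φ]
  have he : ∀ z, Sum.elim f (fun b => (b, b)) (e z : Y ⊕ B) =
      Sum.elim (f.restrict U) (fun b => (b, b)) z := by
    rintro (u | b) <;> rfl
  refine ⟨Φ, ?_, ?_, ?_, fun b hb t => ?_⟩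
  · refine e.surjective.forall.2 fun z => ?_
    rw [hΦ, he]
    exact sectionCompression_zero _ _ hsec z
  · refine e.surjective.forall.2 fun z => ?_
    rw [hΦ]
    exact sectionCompression_one_fst_eq_snd _ _ hsec z
  · refine e.surjective.forall.2 fun z t => ?_
    rw [hΦ, he]
    exact sectionCompression_snd _ _ z t
  · exact (hΦ (Sum.inr b) t).trans (sectionCompression_inr _ _ b t)

/-- Given a continuous `f : Y → B × B` and an open `U ⊆ Y` with a continuous local
section `sec : U → P(B)` of the pullback of the path fibration (`(sec(y)(0), sec(y)(1)) = f(y)`),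
the extension `f̂` of `f` to `Ŷ = Y ⊕ B` (with `f̂(b) = (b,b)`) restricted to
`Û = U ⊕ B` is fibrewise compressible into the diagonal by a fibrewise pointed
homotopy. -/
theorem section_gives_pointed_compression (B Y : Type) [TopologicalSpace B]
    [TopologicalSpace Y] (f : C(Y, B × B)) (U : Set Y) (hU : IsOpen U)
    (sec : C(↥U, C(I, B))) (hsec : ∀ y : ↥U, (sec y 0, sec y 1) = f (y : Y)) :
    ∃ Φ : C(↥(Sum.inl '' U ∪ Set.range Sum.inr : Set (Y ⊕ B)) × I, B × B),
      (∀ x : ↥(Sum.inl '' U ∪ Set.range Sum.inr : Set (Y ⊕ B)),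
        Φ (x, 0) = Sum.elim ⇑f (fun b => (b, b)) (x : Y ⊕ B)) ∧
      (∀ x : ↥(Sum.inl '' U ∪ Set.range Sum.inr : Set (Y ⊕ B)),
        (Φ (x, 1)).1 = (Φ (x, 1)).2) ∧
      (∀ (x : ↥(Sum.inl '' U ∪ Set.range Sum.inr : Set (Y ⊕ B))) (t : I),
        (Φ (x, t)).2 = (Sum.elim ⇑f (fun b => (b, b)) (x : Y ⊕ B)).2) ∧
      (∀ (b : B) (hb : (Sum.inr b : Y ⊕ B) ∈ (Sum.inl '' U ∪ Set.range Sum.inr : Set (Y ⊕ B)))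
        (t : I), Φ (⟨Sum.inr b, hb⟩, t) = (b, b)) :=
  section_gives_pointed_compression_general B Y f U sec hsec
end

section
/- Let B and Y be topological spaces, p_Y : Y → B continuous, and f : Y → B × B a continuous map whose second coordinate equals p_Y (i.e. snd ∘ f = p_Y). Let U ⊆ Y be open and suppose there is a continuous homotopy φ : U × [0,1] → B × B with φ(y,0) = f(y), φ(y,1) ∈ Δ(B), and snd(φ(y,t)) = snd(f(y)) for all y ∈ U, t ∈ [0,1]. Then there exists a continuous map σ : U → P(B) with (σ(y)(0), σ(y)(1)) = f(y) for all y ∈ U. -/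
open unitInterval

/-- If `f : Y → B × B` has second coordinate `p_Y` and `f` restricted to an open
`U ⊆ Y` is fibrewise compressible into the diagonal, then there is a continuous local
section `σ : U → P(B)` of the pullback along `f` of the path fibration
`π : P(B) → B × B`, i.e. `(σ(y)(0), σ(y)(1)) = f(y)` on `U`. -/
theorem compression_gives_section (B Y : Type) [TopologicalSpace B] [TopologicalSpace Y]
    (pY : C(Y, B)) (f : C(Y, B × B)) (hf : ∀ y, (f y).2 = pY y)
    (U : Set Y) (hU : IsOpen U)
    (phi : C(↥U × I, B × B))
    (h0 : ∀ y : ↥U, phi (y, 0) = f (y : Y))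
    (h1 : ∀ y : ↥U, (phi (y, 1)).1 = (phi (y, 1)).2)
    (h2 : ∀ (y : ↥U) (t : I), (phi (y, t)).2 = (f (y : Y)).2) :
    ∃ sec : C(↥U, C(I, B)), ∀ y : ↥U, (sec y 0, sec y 1) = f (y : Y) := by
  refine ⟨ContinuousMap.curry ⟨fun p => (phi p).1, (continuous_fst.comp phi.continuous)⟩, ?_⟩
  intro y
  have e0 : (phi (y, 0)).1 = (f (y : Y)).1 := by rw [h0]
  have e1 : (phi (y, 1)).1 = (f (y : Y)).2 := by rw [h1, h2]
  exact Prod.ext e0 e1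
end

section
/- Let K be a locally finite simplicial complex in a finite-dimensional real vector space and let B be its underlying space with the subspace topology (local finiteness: every point of B has a neighborhood in B meeting only finitely many faces of K). Then there exist continuous maps u : B × B → [0,1] and h : (B × B) × [0,1] → B × B such that: u⁻¹(0) = Δ(B); h((x,y),0) = (x,y) for all x, y ∈ B; h((x,x),t) = (x,x) for all x ∈ B and t ∈ [0,1]; the second coordinate of h((x,y),t) equals y for all x, y ∈ B and t ∈ [0,1]; and h((x,y),1) ∈ Δ(B) whenever u(x,y) < 1. In particular the pair (B × B, Δ(B)) is an NDR pair, and the fibrewise pointed space d(B) = (B × B, second-factor projection, diagonal section) over B is fibrewise well-pointed. -/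
/-!
Following Milnor, local finiteness makes the barycentric coordinates `b_x` continuous on `B`, hence
so is the overlap `S(x, y) = ∑ᵥ min (b_x v) (b_y v)`. It is at most `1`, with equality exactly on
the diagonal. When `S(x, y) > 0`, the barycentre `c` of the common weights `min (b_x v) (b_y v)`
lies in the closed carrier simplices of both `x` and `y`, so the broken line `x → c → y` stays
in `B`. Put `u = 2 - 2S` and let `h` run along the broken line up to time `4S - 1`, both clamped to
`[0, 1]`: where `u < 1` we have `S > 1/2`, so the whole line is traversed, and where `S ≤ 1/4`
nothing moves.
-/

open Set Function Topology unitInterval AffineMap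

section BrokenLine

variable {E : Type*} [AddCommGroup E] [Module ℝ E]

noncomputable def brokenLine (a b c : E) (t : ℝ) : E :=
  if t ≤ 2⁻¹ then lineMap a b (2 * t) else lineMap b c (2 * t - 1)

theorem brokenLine_zero (a b c : E) : brokenLine a b c 0 = a := by
  simp [brokenLine]

theorem brokenLine_one (a b c : E) : brokenLine a b c 1 = c := by
  norm_num [brokenLine]

theorem brokenLine_self (a : E) (t : ℝ) : brokenLine a a a t = a := by
  simp [brokenLine]

theorem brokenLine_mem {s t : Set E} (hs : Convex ℝ s) (ht : Convex ℝ t) {a b c : E}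
    (ha : a ∈ s) (hbs : b ∈ s) (hbt : b ∈ t) (hc : c ∈ t) {τ : ℝ} (hτ : τ ∈ Icc (0 : ℝ) 1) :
    brokenLine a b c τ ∈ s ∪ t := by
  obtain ⟨hτ₀, hτ₁⟩ := hτ
  unfold brokenLine
  split_ifs with h
  · exact Or.inl (hs.lineMap_mem ha hbs ⟨by linarith, by linarith⟩)
  · exact Or.inr (ht.lineMap_mem hbt hc ⟨by linarith, by linarith⟩)

theorem Continuous.brokenLine [TopologicalSpace E] [IsTopologicalAddGroup E]
    [ContinuousSMul ℝ E] {X : Type*} [TopologicalSpace X] {a b c : X → E} {t : X → ℝ}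
    (ha : Continuous a) (hb : Continuous b) (hc : Continuous c) (ht : Continuous t) :
    Continuous fun x => _root_.brokenLine (a x) (b x) (c x) (t x) :=
  Continuous.if_le (ha.lineMap hb (continuous_const.mul ht))
    (hb.lineMap hc ((continuous_const.mul ht).sub continuous_const)) ht continuous_const
    fun x hx => by norm_num [hx]

end BrokenLine

namespace Geometry.SimplicialComplex

variable {E : Type*} [NormedAddCommGroup E] [NormedSpace ℝ E] (K : SimplicialComplex ℝ E)

def closedSimplex (s : Finset E) : Set K.space := Subtype.val ⁻¹' convexHull ℝ (s : Set E)

theorem isClosed_closedSimplex (s : Finset E) : IsClosed (K.closedSimplex s) :=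
  (s.finite_toSet.isCompact_convexHull (𝕜 := ℝ)).isClosed.preimage continuous_subtype_val

theorem locallyFinite_closedSimplex (hlf : ∀ x : K.space, ∃ N : Set K.space, N ∈ nhds x ∧
      {s ∈ K.faces | ∃ y : K.space, y ∈ N ∧ (y : E) ∈ convexHull ℝ (s : Set E)}.Finite) :
    LocallyFinite fun s : K.faces => K.closedSimplex s := by
  intro x
  obtain ⟨N, hN, hfin⟩ := hlf x
  exact ⟨N, hN, (hfin.preimage Subtype.val_injective.injOn).subset
    fun s ⟨y, hys, hyN⟩ => ⟨s.2, y, hyN, hys⟩⟩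

section Barycentric

/-- Some face whose closed simplex contains `x`, not necessarily the smallest one. -/
noncomputable def carrier (x : K.space) : Finset E := (mem_space_iff.1 x.2).choose

theorem carrier_mem_faces (x : K.space) : K.carrier x ∈ K.faces :=
  (mem_space_iff.1 x.2).choose_spec.1

theorem mem_closedSimplex_carrier (x : K.space) : x ∈ K.closedSimplex (K.carrier x) :=
  (mem_space_iff.1 x.2).choose_spec.2

noncomputable def baryCoord (x : K.space) : E → ℝ :=
  (K.carrier x : Set E).indicator (Finset.mem_convexHull'.1 (K.mem_closedSimplex_carrier x)).choose

variable {K}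

theorem baryCoord_nonneg (x : K.space) (v : E) : 0 ≤ K.baryCoord x v :=
  indicator_nonneg (Finset.mem_convexHull'.1 (K.mem_closedSimplex_carrier x)).choose_spec.1 v

theorem baryCoord_of_notMem {x : K.space} {v : E} (hv : v ∉ K.carrier x) : K.baryCoord x v = 0 :=
  indicator_of_notMem hv _

theorem sum_baryCoord (x : K.space) : ∑ v ∈ K.carrier x, K.baryCoord x v = 1 := by
  rw [baryCoord, Finset.sum_indicator_subset _ subset_rfl]
  exact (Finset.mem_convexHull'.1 (K.mem_closedSimplex_carrier x)).choose_spec.2.1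

theorem sum_baryCoord_smul (x : K.space) : ∑ v ∈ K.carrier x, K.baryCoord x v • v = x := by
  rw [baryCoord, Finset.sum_indicator_subset_of_eq_zero _ (fun v r => r • v) subset_rfl
    fun v => zero_smul ℝ v]
  exact (Finset.mem_convexHull'.1 (K.mem_closedSimplex_carrier x)).choose_spec.2.2

theorem support_baryCoord_subset (x : K.space) : support (K.baryCoord x) ⊆ K.carrier x :=
  support_indicator_subset

theorem finsum_baryCoord (x : K.space) : ∑ᶠ v, K.baryCoord x v = 1 := by
  rw [finsum_eq_sum_of_support_subset _ (support_baryCoord_subset x), sum_baryCoord]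

theorem finsum_baryCoord_smul (x : K.space) : ∑ᶠ v, K.baryCoord x v • v = x := by
  rw [finsum_eq_sum_of_support_subset (fun v => K.baryCoord x v • v)
    ((support_smul_subset_left _ id).trans (support_baryCoord_subset x)), sum_baryCoord_smul]

/-- The weights of `x` over the face `carrier x ∩ s` are its barycentric coordinates, by affine
independence of `carrier x`. -/
theorem baryCoord_eq_zero_of_mem_closedSimplex {s : Finset E} (hs : s ∈ K.faces) {x : K.space}
    (hx : x ∈ K.closedSimplex s) {v : E} (hv : v ∉ s) : K.baryCoord x v = 0 := by
  classical
  have hmem := K.inter_subset_convexHull (K.carrier_mem_faces x) hs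
    ⟨K.mem_closedSimplex_carrier x, hx⟩
  rw [← Finset.coe_inter] at hmem
  obtain ⟨w, -, hw₁, hwx⟩ := Finset.mem_convexHull'.1 hmem
  have hsub : K.carrier x ∩ s ⊆ K.carrier x := Finset.inter_subset_left
  have heq := (K.indep (K.carrier_mem_faces x)).eq_of_sum_eq_sum_subtype
    (w₁ := K.baryCoord x) (w₂ := ((K.carrier x ∩ s : Finset E) : Set E).indicator w)
    (by rw [sum_baryCoord, Finset.sum_indicator_subset _ hsub, hw₁])
    (by rw [sum_baryCoord_smul, Finset.sum_indicator_subset_of_eq_zero _ (fun v r => r • v) hsub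
      fun v => zero_smul ℝ v, hwx])
  by_cases hvx : v ∈ K.carrier x
  · rw [heq v hvx, indicator_of_notMem fun h => hv (Finset.mem_inter.1 h).2]
  · exact baryCoord_of_notMem hvx

theorem support_baryCoord_subset_of_mem_closedSimplex {s : Finset E} (hs : s ∈ K.faces)
    {x : K.space} (hx : x ∈ K.closedSimplex s) : support (K.baryCoord x) ⊆ s :=
  fun _ hv => by_contra fun h => hv (baryCoord_eq_zero_of_mem_closedSimplex hs hx h)

theorem sum_baryCoord_of_mem_closedSimplex {s : Finset E} (hs : s ∈ K.faces) {x : K.space}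
    (hx : x ∈ K.closedSimplex s) : ∑ v ∈ s, K.baryCoord x v = 1 := by
  rw [← finsum_eq_sum_of_support_subset _ (support_baryCoord_subset_of_mem_closedSimplex hs hx),
    finsum_baryCoord]

theorem sum_baryCoord_smul_of_mem_closedSimplex {s : Finset E} (hs : s ∈ K.faces) {x : K.space}
    (hx : x ∈ K.closedSimplex s) : ∑ v ∈ s, K.baryCoord x v • v = x := by
  rw [← finsum_eq_sum_of_support_subset (fun v => K.baryCoord x v • v)
    ((support_smul_subset_left _ id).trans
    (support_baryCoord_subset_of_mem_closedSimplex hs hx)), finsum_baryCoord_smul]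

end Barycentric

section Continuity

variable {K}

/-- On a face `s`, the barycentric coordinates invert the injective linear map
`w ↦ (∑ᵢ wᵢ • i, ∑ᵢ wᵢ)`, whose left inverse is continuous in finite dimension. -/
theorem continuousOn_baryCoord [FiniteDimensional ℝ E] {s : Finset E} (hs : s ∈ K.faces)
    (v : E) : ContinuousOn (fun x => K.baryCoord x v) (K.closedSimplex s) := by
  by_cases hv : v ∈ s
  swap
  · exact continuousOn_const.congr fun x hx => baryCoord_eq_zero_of_mem_closedSimplex hs hx hv
  let L : (s → ℝ) →ₗ[ℝ] E × ℝ := Fintype.linearCombination ℝ fun i : s => ((i : E), (1 : ℝ))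
  have hL : LinearMap.ker L = ⊥ := by
    refine LinearMap.ker_eq_bot'.2 fun w hw => funext fun i => ?_
    simp only [L, Fintype.linearCombination_apply, Prod.smul_mk, smul_eq_mul, mul_one,
      Prod.ext_iff, Prod.fst_sum, Prod.snd_sum, Prod.fst_zero, Prod.snd_zero] at hw
    exact (K.indep hs).eq_zero_of_sum_eq_zero hw.2 hw.1 i (Finset.mem_univ i)
  obtain ⟨g, hg⟩ := L.exists_leftInverse_of_injective hL
  have hcont : Continuous fun x : K.space => g ((x : E), 1) ⟨v, hv⟩ :=
    (continuous_apply _).comp (g.continuous_of_finiteDimensional.comp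
      (continuous_subtype_val.prodMk continuous_const))
  refine hcont.continuousOn.congr fun x hx => ?_
  have hLx : L (fun i => K.baryCoord x i) = ((x : E), 1) := by
    simp only [L, Fintype.linearCombination_apply, Prod.smul_mk, smul_eq_mul, mul_one,
      Prod.ext_iff, Prod.fst_sum, Prod.snd_sum]
    exact ⟨by rw [Finset.sum_coe_sort s fun v => K.baryCoord x v • v,
        sum_baryCoord_smul_of_mem_closedSimplex hs hx],
      by rw [Finset.sum_coe_sort s (K.baryCoord x), sum_baryCoord_of_mem_closedSimplex hs hx]⟩
  change K.baryCoord x v = g ((x : E), 1) ⟨v, hv⟩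
  rw [← hLx, ← LinearMap.comp_apply, hg, LinearMap.id_apply]

variable (hK : LocallyFinite fun s : K.faces => K.closedSimplex s)
include hK

theorem continuous_baryCoord [FiniteDimensional ℝ E] (v : E) :
    Continuous fun x => K.baryCoord x v :=
  hK.continuous (iUnion_eq_univ_iff.2 fun x => ⟨⟨_, K.carrier_mem_faces x⟩,
    K.mem_closedSimplex_carrier x⟩) (fun s => K.isClosed_closedSimplex s)
    fun s => continuousOn_baryCoord s.2 v

theorem locallyFinite_support_baryCoord :
    LocallyFinite fun v => support fun x : K.space => K.baryCoord x v := by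
  intro x₀
  obtain ⟨t, ht, hfin⟩ := hK x₀
  refine ⟨t, ht, (hfin.biUnion fun s _ => s.1.finite_toSet).subset ?_⟩
  rintro v ⟨y, hyv, hyt⟩
  exact mem_iUnion₂.2 ⟨⟨_, K.carrier_mem_faces y⟩, ⟨y, K.mem_closedSimplex_carrier y, hyt⟩,
    by_contra fun h => hyv (baryCoord_of_notMem h)⟩

end Continuity

section Overlap

noncomputable def commonWeight (x y : K.space) (v : E) : ℝ := min (K.baryCoord x v) (K.baryCoord y v)

noncomputable def overlap (x y : K.space) : ℝ := ∑ᶠ v, K.commonWeight x y v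

noncomputable def commonMass (x y : K.space) : E := ∑ᶠ v, K.commonWeight x y v • v

variable {K}

theorem commonWeight_comm (x y : K.space) : K.commonWeight x y = K.commonWeight y x :=
  funext fun _ => min_comm _ _

theorem overlap_comm (x y : K.space) : K.overlap x y = K.overlap y x := by
  rw [overlap, overlap, commonWeight_comm]

theorem commonMass_comm (x y : K.space) : K.commonMass x y = K.commonMass y x := by
  rw [commonMass, commonMass, commonWeight_comm]

theorem commonWeight_self (x : K.space) : K.commonWeight x x = K.baryCoord x :=
  funext fun _ => min_self _

theorem commonWeight_nonneg (x y : K.space) (v : E) : 0 ≤ K.commonWeight x y v :=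
  le_min (baryCoord_nonneg x v) (baryCoord_nonneg y v)

theorem commonWeight_eq_zero {x : K.space} {v : E} (h : K.baryCoord x v = 0) (y : K.space) :
    K.commonWeight x y v = 0 := by
  rw [commonWeight, h]
  exact min_eq_left (baryCoord_nonneg y v)

theorem support_commonWeight_subset (x y : K.space) :
    support (K.commonWeight x y) ⊆ K.carrier x :=
  fun _ hv => by_contra fun h => hv (commonWeight_eq_zero (baryCoord_of_notMem h) y)

theorem overlap_eq_sum (x y : K.space) :
    K.overlap x y = ∑ v ∈ K.carrier x, K.commonWeight x y v :=
  finsum_eq_sum_of_support_subset _ (support_commonWeight_subset x y)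

theorem commonMass_eq_sum (x y : K.space) :
    K.commonMass x y = ∑ v ∈ K.carrier x, K.commonWeight x y v • v :=
  finsum_eq_sum_of_support_subset (fun v => K.commonWeight x y v • v)
    ((support_smul_subset_left _ id).trans (support_commonWeight_subset x y))

theorem overlap_le_one (x y : K.space) : K.overlap x y ≤ 1 := by
  rw [overlap_eq_sum, ← sum_baryCoord x]
  exact Finset.sum_le_sum fun _ _ => min_le_left _ _

theorem overlap_self (x : K.space) : K.overlap x x = 1 := by
  rw [overlap, commonWeight_self, finsum_baryCoord]

theorem commonMass_self (x : K.space) : K.commonMass x x = x := by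
  rw [commonMass, commonWeight_self, finsum_baryCoord_smul]

/-- Termwise `min (b_x v) (b_y v) ≤ b_x v`, and both sides sum to `1`. -/
theorem commonWeight_eq_left_of_overlap_eq_one {x y : K.space} (h : K.overlap x y = 1) :
    K.commonWeight x y = K.baryCoord x := by
  funext v
  by_cases hv : v ∈ K.carrier x
  · refine (Finset.sum_eq_sum_iff_of_le (f := K.commonWeight x y) fun v _ => min_le_left _ _).1 ?_ v hv
    rw [← overlap_eq_sum, h, sum_baryCoord]
  · rw [baryCoord_of_notMem hv, commonWeight_eq_zero (baryCoord_of_notMem hv)]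

theorem overlap_eq_one_iff {x y : K.space} : K.overlap x y = 1 ↔ x = y := by
  refine ⟨fun h => ?_, fun h => h ▸ overlap_self x⟩
  have hx := commonWeight_eq_left_of_overlap_eq_one h
  rw [commonWeight_comm, commonWeight_eq_left_of_overlap_eq_one (overlap_comm x y ▸ h)] at hx
  rw [Subtype.ext_iff, ← finsum_baryCoord_smul x, ← finsum_baryCoord_smul y, hx]

theorem inv_overlap_smul_commonMass_mem_left {x y : K.space} (h : 0 < K.overlap x y) :
    (K.overlap x y)⁻¹ • K.commonMass x y ∈ convexHull ℝ (K.carrier x : Set E) := by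
  rw [overlap_eq_sum] at h ⊢
  rw [commonMass_eq_sum]
  exact (K.carrier x).centerMass_mem_convexHull (z := id)
    (fun v _ => commonWeight_nonneg x y v) h fun _ hv => hv

theorem inv_overlap_smul_commonMass_mem_right {x y : K.space} (h : 0 < K.overlap x y) :
    (K.overlap x y)⁻¹ • K.commonMass x y ∈ convexHull ℝ (K.carrier y : Set E) := by
  rw [overlap_comm] at h
  rw [overlap_comm, commonMass_comm]
  exact inv_overlap_smul_commonMass_mem_left h

variable [FiniteDimensional ℝ E] (hK : LocallyFinite fun s : K.faces => K.closedSimplex s)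
include hK

theorem continuous_overlap : Continuous fun p : K.space × K.space => K.overlap p.1 p.2 :=
  continuous_finsum (fun v => ((continuous_baryCoord hK v).comp continuous_fst).min
      ((continuous_baryCoord hK v).comp continuous_snd))
    (((locallyFinite_support_baryCoord hK).preimage_continuous continuous_fst).subset
      fun _ p hp h0 => hp (commonWeight_eq_zero h0 p.2))

theorem continuous_commonMass : Continuous fun p : K.space × K.space => K.commonMass p.1 p.2 :=
  continuous_finsum (fun v => (((continuous_baryCoord hK v).comp continuous_fst).min
      ((continuous_baryCoord hK v).comp continuous_snd)).smul continuous_const)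
    (((locallyFinite_support_baryCoord hK).preimage_continuous continuous_fst).subset
      fun _ p hp h0 => hp (by dsimp only; rw [commonWeight_eq_zero h0 p.2, zero_smul]))

end Overlap

section StromStructure

/-- The clamp at `4⁻¹` is never seen: `slide` leaves `x` only where `overlap x y > 4⁻¹`. -/
noncomputable def meetPoint (p : K.space × K.space) : E :=
  (max (K.overlap p.1 p.2) 4⁻¹)⁻¹ • K.commonMass p.1 p.2

noncomputable def ndrFun (p : K.space × K.space) : I :=
  projIcc 0 1 zero_le_one (2 - 2 * K.overlap p.1 p.2)

noncomputable def slideTime (p : K.space × K.space) : I :=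
  projIcc 0 1 zero_le_one (4 * K.overlap p.1 p.2 - 1)

noncomputable def slide (q : (K.space × K.space) × I) : E :=
  brokenLine (q.1.1 : E) (K.meetPoint q.1) q.1.2 ((K.slideTime q.1 : ℝ) * q.2)

variable {K}

theorem slide_mem_space (q : (K.space × K.space) × I) : K.slide q ∈ K.space := by
  obtain ⟨⟨x, y⟩, t⟩ := q
  by_cases hS : K.overlap x y ≤ 4⁻¹
  · have h0 : K.slideTime (x, y) = 0 := (projIcc_eq_left zero_lt_one).2 (by linarith)
    simp [slide, h0, brokenLine_zero]
  have hpos : 0 < K.overlap x y := by linarith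
  have hmeet : K.meetPoint (x, y) = (K.overlap x y)⁻¹ • K.commonMass x y := by
    rw [meetPoint, max_eq_left (not_le.1 hS).le]
  rcases brokenLine_mem (convex_convexHull ℝ _) (convex_convexHull ℝ _)
      (K.mem_closedSimplex_carrier x) (hmeet ▸ inv_overlap_smul_commonMass_mem_left hpos)
      (hmeet ▸ inv_overlap_smul_commonMass_mem_right hpos) (K.mem_closedSimplex_carrier y)
      (unitInterval.mul_mem (K.slideTime (x, y)).2 t.2) with h | h
  · exact convexHull_subset_space (K.carrier_mem_faces x) h
  · exact convexHull_subset_space (K.carrier_mem_faces y) h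

theorem slide_zero (x y : K.space) : K.slide ((x, y), 0) = x := by
  simp [slide, brokenLine_zero]

theorem slide_self (x : K.space) (t : I) : K.slide ((x, x), t) = x := by
  rw [slide, meetPoint]
  norm_num [overlap_self, commonMass_self, brokenLine_self]

theorem ndrFun_eq_zero_iff {x y : K.space} : K.ndrFun (x, y) = 0 ↔ x = y := by
  rw [← overlap_eq_one_iff]
  refine (projIcc_eq_left zero_lt_one).trans ⟨fun h => ?_, fun h => ?_⟩ <;>
    linarith [overlap_le_one x y]

theorem slide_one_of_ndrFun_lt_one {x y : K.space} (h : K.ndrFun (x, y) < 1) :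
    K.slide ((x, y), 1) = y := by
  have hS : 2⁻¹ < K.overlap x y := by
    by_contra hS
    exact h.ne ((projIcc_eq_right zero_lt_one).2 (by linarith))
  have h1 : K.slideTime (x, y) = 1 := (projIcc_eq_right zero_lt_one).2 (by linarith)
  simp [slide, h1, brokenLine_one]

variable [FiniteDimensional ℝ E] (hK : LocallyFinite fun s : K.faces => K.closedSimplex s)
include hK

theorem continuous_ndrFun : Continuous K.ndrFun :=
  continuous_projIcc.comp (continuous_const.sub (continuous_const.mul (continuous_overlap hK)))

theorem continuous_slide : Continuous K.slide := by
  have hmeet : Continuous K.meetPoint :=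
    (((continuous_overlap hK).max continuous_const).inv₀ fun p =>
      (lt_of_lt_of_le (by norm_num) (le_max_right _ _)).ne').smul (continuous_commonMass hK)
  have htime : Continuous K.slideTime :=
    continuous_projIcc.comp ((continuous_const.mul (continuous_overlap hK)).sub continuous_const)
  exact (continuous_subtype_val.comp (continuous_fst.comp continuous_fst)).brokenLine
    (hmeet.comp continuous_fst) (continuous_subtype_val.comp (continuous_snd.comp continuous_fst))
    ((continuous_subtype_val.comp (htime.comp continuous_fst)).mul
      (continuous_subtype_val.comp continuous_snd))

end StromStructure

end Geometry.SimplicialComplex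

/-- Milnor's lemma: for a locally finite simplicial complex `K` with underlying space
`B = K.space` (subspace topology), the pair `(B × B, Δ(B))` admits a fibrewise Strøm
structure `(u, h)` over `B` (second-factor projection, diagonal section):
`u⁻¹(0) = Δ(B)`, `h` starts at the identity, is stationary on the diagonal, preserves
the second coordinate, and compresses `{u < 1}` into the diagonal at time `1`. In
particular `(B × B, Δ(B))` is an NDR pair and `d(B)` is fibrewise well-pointed. -/
theorem diagonal_ndr_of_locally_finite_simplicial_complex
    (E : Type) [NormedAddCommGroup E] [NormedSpace ℝ E] [FiniteDimensional ℝ E]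
    (K : Geometry.SimplicialComplex ℝ E)
    (hlf : ∀ x : K.space, ∃ N : Set K.space, N ∈ nhds x ∧
      {s ∈ K.faces | ∃ y : K.space, y ∈ N ∧ (y : E) ∈ convexHull ℝ (s : Set E)}.Finite) :
    ∃ (u : C(K.space × K.space, I)) (h : C((K.space × K.space) × I, K.space × K.space)),
      (∀ x y : K.space, u (x, y) = 0 ↔ x = y) ∧
      (∀ x y : K.space, h ((x, y), 0) = (x, y)) ∧
      (∀ (x : K.space) (t : I), h ((x, x), t) = (x, x)) ∧
      (∀ (x y : K.space) (t : I), (h ((x, y), t)).2 = y) ∧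
      (∀ x y : K.space, u (x, y) < 1 → (h ((x, y), 1)).1 = (h ((x, y), 1)).2) := by
  have hK := K.locallyFinite_closedSimplex hlf
  refine ⟨⟨K.ndrFun, K.continuous_ndrFun hK⟩,
    ⟨fun q => (⟨K.slide q, K.slide_mem_space q⟩, q.1.2),
      ((K.continuous_slide hK).subtype_mk _).prodMk (continuous_snd.comp continuous_fst)⟩,
    fun x y => K.ndrFun_eq_zero_iff, fun x y => ?_, fun x t => ?_, fun x y t => rfl,
    fun x y hu => Subtype.ext (K.slide_one_of_ndrFun_lt_one hu)⟩
  · exact Prod.ext (Subtype.ext (K.slide_zero x y)) rfl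
  · exact Prod.ext (Subtype.ext (K.slide_self x t)) rfl
end

section
/- Let (X, p, s) be a fibrewise pointed space over a topological space B and let m ≥ 0. Then the following are equivalent: (i) there exists a continuous homotopy G : X × [0,1] → Π^{m+1}_B X with G(x,0) = Δ^{m+1}(x), G(x,1) ∈ T^{m+1}_B X, the common p-value of the coordinates of G(x,t) equal to p(x), and G(s(b), t) = Δ^{m+1}(s(b)) for all x ∈ X, b ∈ B, t ∈ [0,1] (i.e. the fibrewise diagonal is compressible into the fibrewise fat wedge by a fibrewise pointed homotopy); (ii) there exists a continuous map σ : X → P^m_B(Ω X) with σ(s(b)) = (s(b), the constant path at Δ^{m+1}(s(b))) for all b ∈ B, together with a continuous homotopy K : X × [0,1] → X such that K(x,0) = e_m(σ(x)), K(x,1) = x, p(K(x,t)) = p(x), and K(s(b),t) = s(b) for all x ∈ X, b ∈ B, t ∈ [0,1] (i.e. the identity of X lifts through e_m up to fibrewise pointed homotopy). -/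
open unitInterval

/-- The `m`-th fibrewise Ganea space of a fibrewise pointed space `(X, p, s)`:
the homotopy pull-back of the diagonal `Δ : X → Π^{m+1}_B X` and the inclusion of the
fibrewise fat wedge `T^{m+1}_B X ↪ Π^{m+1}_B X`. A point is a pair `(x, ℓ)` of a point
of `X` and a fibrewise path in the `(m+1)`-fold fibrewise product starting at `Δ(x)`
and ending in the fat wedge. -/
abbrev GaneaSpace (B X : Type) [TopologicalSpace B] [TopologicalSpace X]
    (p : C(X, B)) (s : C(B, X)) (m : ℕ) : Type :=
  {xl : X × C(I, Fin (m + 1) → X) //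
    (∀ (t : I) (i : Fin (m + 1)), p (xl.2 t i) = p xl.1) ∧
    (xl.2 0 = fun _ => xl.1) ∧
    (∃ i : Fin (m + 1), xl.2 1 i = s (p (xl.2 1 i)))}

/-- Ganea-style criterion for the fibrewise pointed L-S category: the fibrewise
diagonal `Δ^{m+1} : X → Π^{m+1}_B X` is compressible into the fibrewise fat wedge
`T^{m+1}_B X` by a fibrewise pointed homotopy iff the identity of `X` admits a
fibrewise pointed homotopy lift through `e_m : P^m_B(ΩX) → X`. -/
theorem catBB_le_iff_ganea_section (B X : Type) [TopologicalSpace B] [TopologicalSpace X]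
    (p : C(X, B)) (s : C(B, X)) (hps : ∀ b, p (s b) = b) (m : ℕ) :
    (∃ G : C(X × I, Fin (m + 1) → X),
      (∀ x : X, G (x, 0) = fun _ => x) ∧
      (∀ x : X, ∃ i : Fin (m + 1), G (x, 1) i = s (p (G (x, 1) i))) ∧
      (∀ (x : X) (t : I) (i : Fin (m + 1)), p (G (x, t) i) = p x) ∧
      (∀ (b : B) (t : I), G (s b, t) = fun _ => s b)) ↔
    (∃ sig : C(X, GaneaSpace B X p s m), ∃ K : C(X × I, X),
      (∀ b : B, ((sig (s b)) : X × C(I, Fin (m + 1) → X)).1 = s b ∧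
        ∀ t : I, ((sig (s b)) : X × C(I, Fin (m + 1) → X)).2 t = fun _ => s b) ∧
      (∀ x : X, K (x, 0) = ((sig x) : X × C(I, Fin (m + 1) → X)).1) ∧
      (∀ x : X, K (x, 1) = x) ∧
      (∀ (x : X) (t : I), p (K (x, t)) = p x) ∧
      (∀ (b : B) (t : I), K (s b, t) = s b)) := by

  constructor
  · rintro ⟨G, hG0, hG1, hGp, hGs⟩
    refine ⟨⟨fun x => ⟨(x, G.curry x), ?_, ?_, ?_⟩, ?_⟩,
      ⟨fun xt => xt.1, continuous_fst⟩, ?_, ?_, ?_, ?_, ?_⟩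
    · intro t i; exact hGp x t i
    · exact hG0 x
    · exact hG1 x
    · exact Continuous.subtype_mk (continuous_id.prodMk G.curry.continuous) _
    · intro b
      exact ⟨rfl, fun t => hGs b t⟩
    · intro x; rfl
    · intro x; rfl
    · intro x t; rfl
    · intro b t; rfl
  · rintro ⟨sig, K, hsigs, hK0, hK1, hKp, hKs⟩
    set f0 : C(X, Fin (m + 1) → X) :=
      ⟨fun x _ => x, continuous_pi fun _ => continuous_id⟩ with hf0
    set f1 : C(X, Fin (m + 1) → X) :=
      ⟨fun x _ => ((sig x : X × C(I, Fin (m + 1) → X)).1),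
        continuous_pi fun _ =>
          continuous_fst.comp (continuous_subtype_val.comp sig.continuous)⟩ with hf1
    have hsnd : Continuous fun x : X => ((sig x : X × C(I, Fin (m + 1) → X)).2) :=
      continuous_snd.comp (continuous_subtype_val.comp sig.continuous)
    set f2 : C(X, Fin (m + 1) → X) :=
      ⟨fun x => ((sig x : X × C(I, Fin (m + 1) → X)).2) 1,
        by
          have : Continuous fun x : X =>
              (((sig x : X × C(I, Fin (m + 1) → X)).2), (1 : I)) :=
            hsnd.prodMk continuous_const
          exact ContinuousEval.continuous_eval.comp this⟩ with hf2
    set H1 : ContinuousMap.Homotopy f0 f1 :=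
      { toContinuousMap := ⟨fun q => fun _ => K (q.2, σ q.1),
          continuous_pi fun _ => K.continuous.comp
            (continuous_snd.prodMk (continuous_symm.comp continuous_fst))⟩
        map_zero_left := fun x => by
          funext i
          show K (x, σ 0) = x
          rw [symm_zero]
          exact hK1 x
        map_one_left := fun x => by
          funext i
          show K (x, σ 1) = (sig x : X × C(I, Fin (m + 1) → X)).1
          rw [symm_one]
          exact hK0 x } with hH1
    set H2 : ContinuousMap.Homotopy f1 f2 :=
      { toContinuousMap := ⟨fun q => ((sig q.2 : X × C(I, Fin (m + 1) → X)).2) q.1,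
          ContinuousEval.continuous_eval.comp
            ((hsnd.comp continuous_snd).prodMk continuous_fst)⟩
        map_zero_left := fun x => (sig x).2.2.1
        map_one_left := fun x => rfl } with hH2
    set H := H1.trans H2 with hH
    have hHval : ∀ (x : X) (t : I) (i : Fin (m + 1)), p (H (t, x) i) = p x := by
      intro x t i
      rw [ContinuousMap.Homotopy.trans_apply]
      split
      · show p (K (x, _)) = p x
        exact hKp x _
      · have key : ∀ τ : I, p (((sig x : X × C(I, Fin (m + 1) → X)).2) τ i) = p x := by
          intro τ
          rw [(sig x).2.1 τ i]
          have h0 := hKp x 0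
          rw [hK0 x] at h0
          exact h0
        exact key _
    have hHs : ∀ (b : B) (t : I), H (t, s b) = fun _ => s b := by
      intro b t
      rw [ContinuousMap.Homotopy.trans_apply]
      split
      · funext i
        show K (s b, _) = s b
        exact hKs b _
      · exact (hsigs b).2 _
    refine ⟨⟨fun xt => H (xt.2, xt.1), H.continuous.comp (continuous_snd.prodMk continuous_fst)⟩,
      ?_, ?_, ?_, ?_⟩
    · intro x
      exact H.map_zero_left x
    · intro x
      have h1 : H (1, x) = ((sig x : X × C(I, Fin (m + 1) → X)).2) 1 := H.map_one_left x
      show ∃ i, H (1, x) i = s (p (H (1, x) i))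
      rw [h1]
      exact (sig x).2.2.2
    · intro x t i
      exact hHval x t i
    · intro b t
      exact hHs b t
end

section
/- Let (X, p, s) be a fibrewise pointed space over a topological space B and let m ≥ 0. Then the following are equivalent: (i) there exists a continuous homotopy G : X × [0,1] → Π^{m+1}_B X with G(x,0) = Δ^{m+1}(x), G(x,1) ∈ T^{m+1}_B X, and the common p-value of the coordinates of G(x,t) equal to p(x) for all x ∈ X and t ∈ [0,1] (i.e. the fibrewise diagonal is compressible into the fibrewise fat wedge by a fibrewise, not necessarily pointed, homotopy); (ii) there exists a continuous map σ : X → P^m_B(Ω X) together with a continuous homotopy K : X × [0,1] → X such that K(x,0) = e_m(σ(x)), K(x,1) = x, and p(K(x,t)) = p(x) for all x ∈ X and t ∈ [0,1] (i.e. the identity of X lifts through e_m up to fibrewise homotopy). -/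
open unitInterval

/-- Ganea-style criterion for the fibrewise unpointed L-S category: the fibrewise
diagonal `Δ^{m+1} : X → Π^{m+1}_B X` is compressible into the fibrewise fat wedge
`T^{m+1}_B X` by a fibrewise (not necessarily pointed) homotopy iff the identity of
`X` admits a fibrewise homotopy lift through `e_m : P^m_B(ΩX) → X`. -/
theorem catStar_le_iff_ganea_section (B X : Type) [TopologicalSpace B] [TopologicalSpace X]
    (p : C(X, B)) (s : C(B, X)) (hps : ∀ b, p (s b) = b) (m : ℕ) :
    (∃ G : C(X × I, Fin (m + 1) → X),
      (∀ x : X, G (x, 0) = fun _ => x) ∧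
      (∀ x : X, ∃ i : Fin (m + 1), G (x, 1) i = s (p (G (x, 1) i))) ∧
      (∀ (x : X) (t : I) (i : Fin (m + 1)), p (G (x, t) i) = p x)) ↔
    (∃ sig : C(X, GaneaSpace B X p s m), ∃ K : C(X × I, X),
      (∀ x : X, K (x, 0) = ((sig x) : X × C(I, Fin (m + 1) → X)).1) ∧
      (∀ x : X, K (x, 1) = x) ∧
      (∀ (x : X) (t : I), p (K (x, t)) = p x)) := by
  constructor
  · rintro ⟨G, hG0, hG1, hGp⟩
    refine ⟨⟨fun x => ⟨(x, G.curry x), ?_, ?_, ?_⟩, ?_⟩,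
      ⟨fun q => q.1, continuous_fst⟩, fun x => rfl, fun x => rfl, fun x t => rfl⟩
    · intro t i; exact hGp x t i
    · exact hG0 x
    · exact hG1 x
    · exact Continuous.subtype_mk (continuous_id.prodMk G.curry.continuous) _
  · rintro ⟨sig, K, hK0, hK1, hKp⟩
    have hcont2 : Continuous fun q : I × X => ((sig q.2 : X × C(I, Fin (m + 1) → X)).2) q.1 := by
      exact ContinuousEval.continuous_eval.comp
        ((continuous_snd.comp (continuous_subtype_val.comp (sig.continuous.comp
          continuous_snd))).prodMk continuous_fst)
    let f0 : C(X, Fin (m + 1) → X) := ⟨fun x _ => x, continuous_pi fun _ => continuous_id⟩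
    let fmid : C(X, Fin (m + 1) → X) :=
      ⟨fun x _ => (sig x : X × C(I, Fin (m + 1) → X)).1,
        continuous_pi fun _ => continuous_fst.comp (continuous_subtype_val.comp sig.continuous)⟩
    let f1 : C(X, Fin (m + 1) → X) :=
      ⟨fun x => ((sig x : X × C(I, Fin (m + 1) → X)).2) 1, by
        apply continuous_pi; intro i
        exact (continuous_apply i).comp (hcont2.comp (continuous_const.prodMk continuous_id))⟩
    let H1 : ContinuousMap.Homotopy f0 fmid :=
      { toFun := fun q => fun _ => K (q.2, unitInterval.symm q.1)
        continuous_toFun := by continuity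
        map_zero_left := fun x => by
          simp only [unitInterval.symm_zero]; funext i; exact hK1 x
        map_one_left := fun x => by
          simp only [unitInterval.symm_one]; funext i; exact hK0 x }
    let H2 : ContinuousMap.Homotopy fmid f1 :=
      { toFun := fun q => ((sig q.2 : X × C(I, Fin (m + 1) → X)).2) q.1
        continuous_toFun := hcont2
        map_zero_left := fun x => (sig x).2.2.1
        map_one_left := fun x => rfl }
    refine ⟨(H1.trans H2).toContinuousMap.comp ⟨Prod.swap, continuous_swap⟩,
      fun x => (H1.trans H2).apply_zero x, fun x => ?_, fun x t i => ?_⟩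
    · have h1 : (H1.trans H2).toContinuousMap.comp ⟨Prod.swap, continuous_swap⟩ (x, 1)
          = f1 x := (H1.trans H2).apply_one x
      rw [h1]
      exact (sig x).2.2.2
    · show p ((H1.trans H2) (t, x) i) = p x
      rw [ContinuousMap.Homotopy.trans_apply]
      split
      · show p (K (x, _)) = p x
        exact hKp x _
      · show p (((sig x : X × C(I, Fin (m + 1) → X)).2) _ i) = p x
        exact ((sig x).2.1 _ i).trans (((hK0 x) ▸ hKp x 0 : p _ = p x))
end
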